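/- Type specialisation: if e is well-typed with type τ under kind context assigning kinds κᵢ to type variables αᵢ and typing context Γ, and each instantiating type ρᵢ has kind κᵢ under Δ, then the substituted expression e[ρᵢ/αᵢ] has type τ[ρᵢ/αᵢ] under Δ and Γ[ρᵢ/αᵢ]. -/

import Mathlib

inductive Perm | D | S | E
deriving DecidableEq

abbrev Kind := Set Perm

inductive Mode | readOnly | writable | unboxed

def kindOf : Mode → Kind
  | .readOnly => {Perm.D, Perm.S}
  | .writable => {Perm.E}
  | .unboxed  => {Perm.D, Perm.S, Perm.E}

/-- Types, including observed type variables `ovar` (written α!). -/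
inductive Ty
  | unit
  | prim
  | fn (a b : Ty)
  | var (n : ℕ)
  | ovar (n : ℕ)
  | variant (ts : List Ty)
  | record (fs : List (Ty × Bool)) (m : Mode)

/-- bang on kinds. -/
noncomputable def bangKind (κ : Kind) : Kind :=
  open Classical in
  if ({Perm.D, Perm.S} : Kind) ⊆ κ then κ else {Perm.D, Perm.S}

/-- bang on modes. -/
def bangMode : Mode → Mode
  | .readOnly => .readOnly
  | .writable => .readOnly
  | .unboxed  => .unboxed

/-- bang on types. -/
def bangTy : Ty → Ty
  | .unit => .unit
  | .prim => .prim
  | .fn a b => .fn a b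
  | .var n => .ovar n
  | .ovar n => .ovar n
  | .variant ts => .variant (ts.attach.map (fun t => bangTy t.1))
  | .record fs m => .record (fs.attach.map (fun p => (bangTy p.1.1, p.1.2))) (bangMode m)
  decreasing_by
  · simp only [Ty.variant.sizeOf_spec]
    have := List.sizeOf_lt_of_mem t.2; omega
  · simp only [Ty.record.sizeOf_spec]
    have := List.sizeOf_lt_of_mem p.2
    cases hp : p.1 with | mk a b => rw [hp] at this; simp at this ⊢; omega

/-- The kinding judgement `Δ ⊢ τ : κ`. -/
inductive Kinding (Δ : ℕ → Kind) : Ty → Kind → Prop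
  | unit : Kinding Δ .unit κ
  | prim : Kinding Δ .prim κ
  | fn : Kinding Δ (.fn a b) κ
  | var : κ ⊆ Δ n → Kinding Δ (.var n) κ
  | ovar : κ ⊆ bangKind (Δ n) → Kinding Δ (.ovar n) κ
  | variant : (∀ t ∈ ts, Kinding Δ t κ) → Kinding Δ (.variant ts) κ
  | record : κ ⊆ kindOf m → (∀ p ∈ fs, p.2 = false → Kinding Δ p.1 κ) →
      Kinding Δ (.record fs m) κ

/-- Substitution of types for type variables; observed variables α! are mapped
    to bang of the substituted type. -/
def substTy (σ : ℕ → Ty) : Ty → Ty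
  | .unit => .unit
  | .prim => .prim
  | .fn a b => .fn (substTy σ a) (substTy σ b)
  | .var n => σ n
  | .ovar n => bangTy (σ n)
  | .variant ts => .variant (ts.attach.map (fun t => substTy σ t.1))
  | .record fs m => .record (fs.attach.map (fun p => (substTy σ p.1.1, p.1.2))) m
  decreasing_by
  · simp only [Ty.fn.sizeOf_spec]; omega
  · simp only [Ty.fn.sizeOf_spec]; omega
  · simp only [Ty.variant.sizeOf_spec]
    have := List.sizeOf_lt_of_mem t.2; omega
  · simp only [Ty.record.sizeOf_spec]
    have := List.sizeOf_lt_of_mem p.2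
    cases hp : p.1 with | mk a b => rw [hp] at this; simp at this ⊢; omega

abbrev Ctx := List (Option Ty)

/-- Context weakening under kind context Δ: dropped bindings must be
    discardable. -/
inductive Weaken (Δ : ℕ → Kind) : Ctx → Ctx → Prop
  | nil : Weaken Δ [] []
  | keep : Weaken Δ Γ Γ' → Weaken Δ (o :: Γ) (o :: Γ')
  | drop : Kinding Δ τ κ → Perm.D ∈ κ → Weaken Δ Γ Γ' →
      Weaken Δ (some τ :: Γ) (none :: Γ')

/-- Context splitting under kind context Δ: duplicated bindings must be
    shareable. -/
inductive Split (Δ : ℕ → Kind) : Ctx → Ctx → Ctx → Prop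
  | nil : Split Δ [] [] []
  | none : Split Δ Γ Γ₁ Γ₂ → Split Δ (none :: Γ) (none :: Γ₁) (none :: Γ₂)
  | left : Split Δ Γ Γ₁ Γ₂ → Split Δ (some τ :: Γ) (some τ :: Γ₁) (none :: Γ₂)
  | right : Split Δ Γ Γ₁ Γ₂ → Split Δ (some τ :: Γ) (none :: Γ₁) (some τ :: Γ₂)
  | both : Kinding Δ τ κ → Perm.S ∈ κ → Split Δ Γ Γ₁ Γ₂ →
      Split Δ (some τ :: Γ) (some τ :: Γ₁) (some τ :: Γ₂)

/-- A context containing exactly one binding, at position n. -/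
def OnlyAt (Γ : Ctx) (n : ℕ) (τ : Ty) : Prop :=
  Γ[n]? = some (some τ) ∧ ∀ m, m ≠ n → ∀ τ', Γ[m]? = some (some τ') → False

/-- A context containing no bindings. -/
def AllNone (Γ : Ctx) : Prop := ∀ o ∈ Γ, o = none

/-- Expressions (de Bruijn term variables), including polymorphic function
    references `f[ρs]` carrying a list of type arguments. -/
inductive Expr
  | var (n : ℕ)
  | unit
  | letE (e₁ e₂ : Expr)
  | fnRef (f : ℕ) (ρs : List Ty)
  | app (e₁ e₂ : Expr)

/-- Interpret a list of type arguments as a substitution for type variables. -/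
def tyArgs (ρs : List Ty) : ℕ → Ty := fun n => ρs.getD n .unit

/-- Signatures assign to each function name the kinds of its quantified type
    variables and its (function) type. -/
abbrev Sig := ℕ → List Kind × Ty

/-- The typing judgement Δ; Γ ⊢ e : τ.  Polymorphic function references
    require the kind constraints of the quantified variables to hold of the
    type arguments. -/
inductive Typing (Sg : Sig) : (ℕ → Kind) → Ctx → Expr → Ty → Prop
  | var : Weaken Δ Γ Γ' → OnlyAt Γ' n τ → Typing Sg Δ Γ (.var n) τ
  | unit : Weaken Δ Γ Γ' → AllNone Γ' → Typing Sg Δ Γ .unit .unit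
  | letE : Split Δ Γ Γ₁ Γ₂ → Typing Sg Δ Γ₁ e₁ ρ →
      Typing Sg Δ (some ρ :: Γ₂) e₂ τ → Typing Sg Δ Γ (.letE e₁ e₂) τ
  | fnRef : Weaken Δ Γ Γ' → AllNone Γ' → Sg f = (κs, τ) →
      ρs.length = κs.length →
      (∀ (i : ℕ) κ ρ, κs[i]? = some κ → ρs[i]? = some ρ → Kinding Δ ρ κ) →
      Typing Sg Δ Γ (.fnRef f ρs) (substTy (tyArgs ρs) τ)
  | app : Split Δ Γ Γ₁ Γ₂ → Typing Sg Δ Γ₁ e₁ (.fn ρ τ) →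
      Typing Sg Δ Γ₂ e₂ ρ → Typing Sg Δ Γ (.app e₁ e₂) τ

/-- Substitution of types for type variables in an expression: acts on the
    type annotations of function references, homomorphically elsewhere. -/
def substExpr (σ : ℕ → Ty) : Expr → Expr
  | .var n => .var n
  | .unit => .unit
  | .letE e₁ e₂ => .letE (substExpr σ e₁) (substExpr σ e₂)
  | .fnRef f ρs => .fnRef f (ρs.map (substTy σ))
  | .app e₁ e₂ => .app (substExpr σ e₁) (substExpr σ e₂)

/-!
Induction on the typing derivation. Substitution preserves kinding: a variable is replaced
by a type of its kind, and an observed variable `α!` by `ρ!`, which is kinded because bang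
carries a kinding `Δ ⊢ ρ : κ` to `Δ ⊢ ρ! : bangKind κ`. Contexts are split and weakened
along the same derivations, so that leaves only function references, whose type
`τ[ρs]` becomes `τ[ρs][σ] = τ[ρs[σ]]`; this composition law rests on bang commuting
with substitution, i.e. on bang being idempotent.
-/

-- Supplies the termination argument for recursion through record fields.
lemma sizeOf_fst_lt_of_mem {fs : List (Ty × Bool)} {p : Ty × Bool} (hp : p ∈ fs) :
    sizeOf p.1 < sizeOf fs := by
  have := List.sizeOf_lt_of_mem hp
  cases p
  simp only [Prod.mk.sizeOf_spec] at this ⊢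
  omega

@[simp] lemma bangTy_variant (ts : List Ty) :
    bangTy (.variant ts) = .variant (ts.map bangTy) := by
  rw [bangTy, List.attach_map_val]

@[simp] lemma bangTy_record (fs : List (Ty × Bool)) (m : Mode) :
    bangTy (.record fs m) = .record (fs.map fun p => (bangTy p.1, p.2)) (bangMode m) := by
  simpa [bangTy] using
    List.attach_map_val (f := fun p : Ty × Bool => (bangTy p.1, p.2))

@[simp] lemma substTy_variant (σ : ℕ → Ty) (ts : List Ty) :
    substTy σ (.variant ts) = .variant (ts.map (substTy σ)) := by
  rw [substTy, List.attach_map_val]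

@[simp] lemma substTy_record (σ : ℕ → Ty) (fs : List (Ty × Bool)) (m : Mode) :
    substTy σ (.record fs m) = .record (fs.map fun p => (substTy σ p.1, p.2)) m := by
  simpa [substTy] using
    List.attach_map_val (f := fun p : Ty × Bool => (substTy σ p.1, p.2))

@[simp] lemma bangMode_bangMode (m : Mode) : bangMode (bangMode m) = bangMode m := by
  cases m <;> rfl

@[simp] theorem bangTy_bangTy : ∀ t : Ty, bangTy (bangTy t) = bangTy t
  | .unit | .prim | .fn _ _ | .var _ | .ovar _ => by simp [bangTy]
  | .variant ts => by
    simp only [bangTy_variant, List.map_map, Ty.variant.injEq]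
    exact List.map_congr_left fun t _ => bangTy_bangTy t
  | .record fs m => by
    simp only [bangTy_record, List.map_map, bangMode_bangMode, Ty.record.injEq, and_true]
    exact List.map_congr_left fun p hp =>
      have := sizeOf_fst_lt_of_mem hp
      by simp [bangTy_bangTy p.1]

theorem substTy_bangTy (σ : ℕ → Ty) : ∀ t : Ty,
    substTy σ (bangTy t) = bangTy (substTy σ t)
  | .unit | .prim | .fn _ _ | .var _ | .ovar _ => by simp [bangTy, substTy]
  | .variant ts => by
    simp only [bangTy_variant, substTy_variant, List.map_map, Ty.variant.injEq]
    exact List.map_congr_left fun t _ => substTy_bangTy σ t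
  | .record fs m => by
    simp only [bangTy_record, substTy_record, List.map_map, Ty.record.injEq, and_true]
    exact List.map_congr_left fun p hp =>
      have := sizeOf_fst_lt_of_mem hp
      by simp [substTy_bangTy σ p.1]

theorem substTy_substTy (σ σ' : ℕ → Ty) : ∀ t : Ty,
    substTy σ (substTy σ' t) = substTy (fun n => substTy σ (σ' n)) t
  | .unit | .prim | .var _ => by simp [substTy]
  | .ovar n => by simp [substTy, substTy_bangTy]
  | .fn a b => by simp [substTy, substTy_substTy σ σ' a, substTy_substTy σ σ' b]
  | .variant ts => by
    simp only [substTy_variant, List.map_map, Ty.variant.injEq]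
    exact List.map_congr_left fun t _ => substTy_substTy σ σ' t
  | .record fs m => by
    simp only [substTy_record, List.map_map, Ty.record.injEq, and_true]
    exact List.map_congr_left fun p hp =>
      have := sizeOf_fst_lt_of_mem hp
      by simp [substTy_substTy σ σ' p.1]

lemma bangKind_mono {κ κ' : Kind} (h : κ ⊆ κ') : bangKind κ ⊆ bangKind κ' := by
  unfold bangKind
  split_ifs with hκ hκ'
  · exact h
  · exact absurd (hκ.trans h) hκ'
  · assumption
  · rfl

lemma bangKind_bangKind (κ : Kind) : bangKind (bangKind κ) = bangKind κ := by
  unfold bangKind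
  split_ifs <;> simp_all

lemma bangKind_subset_kindOf_bangMode {κ : Kind} {m : Mode} (h : κ ⊆ kindOf m) :
    bangKind κ ⊆ kindOf (bangMode m) := by
  unfold bangKind
  split_ifs with hκ
  · cases m
    · exact h
    · simpa [kindOf] using h (hκ (Set.mem_insert _ _))
    · exact h
  · cases m <;> simp [kindOf, bangMode]

lemma Kinding.anti {Δ : ℕ → Kind} {τ : Ty} {κ κ' : Kind} (hs : κ ⊆ κ')
    (h : Kinding Δ τ κ') : Kinding Δ τ κ := by
  induction h with
  | unit => exact .unit
  | prim => exact .prim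
  | fn => exact .fn
  | var h => exact .var (hs.trans h)
  | ovar h => exact .ovar (hs.trans h)
  | variant _ ih => exact .variant fun t ht => ih t ht hs
  | record h _ ih => exact .record (hs.trans h) fun p hp hb => ih p hp hb hs

lemma Kinding.bang {Δ : ℕ → Kind} {τ : Ty} {κ : Kind} (h : Kinding Δ τ κ) :
    Kinding Δ (bangTy τ) (bangKind κ) := by
  induction h with
  | unit => simpa [bangTy] using .unit
  | prim => simpa [bangTy] using .prim
  | fn => simpa [bangTy] using .fn
  | var h => simpa [bangTy] using .ovar (bangKind_mono h)
  | ovar h =>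
    simpa [bangTy] using .ovar ((bangKind_mono h).trans (bangKind_bangKind _).subset)
  | variant _ ih =>
    refine bangTy_variant _ ▸ .variant fun t ht => ?_
    obtain ⟨t', ht', rfl⟩ := List.mem_map.1 ht
    exact ih t' ht'
  | record h _ ih =>
    refine bangTy_record _ _ ▸ .record (bangKind_subset_kindOf_bangMode h) fun p hp hb => ?_
    obtain ⟨p', hp', rfl⟩ := List.mem_map.1 hp
    exact ih p' hp' hb

lemma OnlyAt.map {Γ : Ctx} {n : ℕ} {τ : Ty} (f : Ty → Ty) (h : OnlyAt Γ n τ) :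
    OnlyAt (Γ.map (Option.map f)) n (f τ) := by
  refine ⟨by simp [h.1], fun m hm τ' hτ' => ?_⟩
  obtain ⟨_ | τ₀, hτ₀, hτ⟩ := Option.map_eq_some_iff.1 (List.getElem?_map ▸ hτ')
  · cases hτ
  · exact h.2 m hm τ₀ hτ₀

lemma AllNone.map {Γ : Ctx} (f : Ty → Ty) (h : AllNone Γ) :
    AllNone (Γ.map (Option.map f)) := by
  intro o ho
  obtain ⟨o', ho', rfl⟩ := List.mem_map.1 ho
  rw [h o' ho', Option.map_none]

lemma tyArgs_map_substTy (σ : ℕ → Ty) (ρs : List Ty) :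
    tyArgs (ρs.map (substTy σ)) = fun n => substTy σ (tyArgs ρs n) := by
  funext n
  simpa [tyArgs, substTy] using List.getD_map ρs Ty.unit (substTy σ) (n := n)

section Specialisation

variable {Δ₀ Δ : ℕ → Kind} {σ : ℕ → Ty} (hσ : ∀ n, Kinding Δ (σ n) (Δ₀ n))
include hσ

lemma Kinding.subst {τ : Ty} {κ : Kind} (h : Kinding Δ₀ τ κ) :
    Kinding Δ (substTy σ τ) κ := by
  induction h with
  | unit => simpa [substTy] using .unit
  | prim => simpa [substTy] using .prim
  | fn => simpa [substTy] using .fn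
  | var h => simpa [substTy] using (hσ _).anti h
  | ovar h => simpa [substTy] using (hσ _).bang.anti h
  | variant _ ih =>
    refine substTy_variant _ _ ▸ .variant fun t ht => ?_
    obtain ⟨t', ht', rfl⟩ := List.mem_map.1 ht
    exact ih t' ht'
  | record h _ ih =>
    refine substTy_record _ _ _ ▸ .record h fun p hp hb => ?_
    obtain ⟨p', hp', rfl⟩ := List.mem_map.1 hp
    exact ih p' hp' hb

lemma Weaken.subst {Γ Γ' : Ctx} (h : Weaken Δ₀ Γ Γ') :
    Weaken Δ (Γ.map (Option.map (substTy σ))) (Γ'.map (Option.map (substTy σ))) := by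
  induction h with
  | nil => exact .nil
  | keep _ ih => exact .keep ih
  | drop hk hD _ ih => exact .drop (hk.subst hσ) hD ih

lemma Split.subst {Γ Γ₁ Γ₂ : Ctx} (h : Split Δ₀ Γ Γ₁ Γ₂) :
    Split Δ (Γ.map (Option.map (substTy σ))) (Γ₁.map (Option.map (substTy σ)))
      (Γ₂.map (Option.map (substTy σ))) := by
  induction h with
  | nil => exact .nil
  | none _ ih => exact .none ih
  | left _ ih => exact .left ih
  | right _ ih => exact .right ih
  | both hk hS _ ih => exact .both (hk.subst hσ) hS ih

end Specialisation

/-- Type specialisation: a well-typed expression remains well-typed after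
    instantiating its type variables with types of the required kinds. -/
theorem type_specialisation {Sg : Sig} {Δ₀ Δ : ℕ → Kind} {Γ : Ctx}
    {e : Expr} {τ : Ty} {σ : ℕ → Ty}
    (ht : Typing Sg Δ₀ Γ e τ)
    (hσ : ∀ n, Kinding Δ (σ n) (Δ₀ n)) :
    Typing Sg Δ (Γ.map (Option.map (substTy σ))) (substExpr σ e)
      (substTy σ τ) := by
  induction ht with
  | var hw ho => exact .var (hw.subst hσ) (ho.map _)
  | unit hw hn => simpa [substTy] using .unit (hw.subst hσ) (hn.map _)
  | letE hs _ _ ih₁ ih₂ => exact .letE (hs.subst hσ) ih₁ ih₂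
  | app hs _ _ ih₁ ih₂ => exact .app (hs.subst hσ) (by simpa [substTy] using ih₁) ih₂
  | fnRef hw hn hf hlen hκs =>
    rw [substTy_substTy, ← tyArgs_map_substTy]
    refine .fnRef (hw.subst hσ) (hn.map _) hf (by simpa using hlen) fun i κ ρ hκ hρ => ?_
    obtain ⟨ρ₀, hρ₀, rfl⟩ := Option.map_eq_some_iff.1 (List.getElem?_map ▸ hρ)
    exact (hκs i κ ρ₀ hκ hρ₀).subst hσ
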